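/- arXiv:1809.07089 — 2 statements merged into one kernel-verified Lean document; each statement's English description precedes it below -/
import Mathlib

section
/- For every 0 < ε < 1/2 there exists a constant σ > 0 such that, with high probability (probability tending to 1 as N → ∞), the random tournament on N vertices is (ε, σ log N)-pseudorandom. -/
open Classical

/-- Number of edges directed from `A` to `B` in the oriented graph `R`. -/
noncomputable def edgeCount {V : Type*} (R : V → V → Prop) (A B : Finset V) : ℕ :=
  {p : V × V | p.1 ∈ A ∧ p.2 ∈ B ∧ R p.1 p.2}.ncard

/-- An oriented graph `R` is `(ε, k)`-pseudorandom if for all disjoint vertex sets `A`, `B`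
of size at least `k` there are at least `ε·|A|·|B|` edges from `A` to `B`. -/
def Pseudorandom {V : Type*} (R : V → V → Prop) (ε k : ℝ) : Prop :=
  ∀ A B : Finset V, Disjoint A B → k ≤ A.card → k ≤ B.card →
    ε * A.card * B.card ≤ (edgeCount R A B : ℝ)

/-- The tournament on `Fin N` determined by the coin flips `b`: for `i < j`, the edge
between `i` and `j` is directed from `i` to `j` iff `b i j = true`. -/
def tournamentOf {N : ℕ} (b : Fin N → Fin N → Bool) : Fin N → Fin N → Prop :=
  fun i j => (i < j ∧ b i j = true) ∨ (j < i ∧ b j i = false)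


section Aux
open Finset

lemma sum_powerset_pow {γ : Type*} [DecidableEq γ] (s : Finset γ) (x y : ℝ) :
    ∑ t ∈ s.powerset, x ^ t.card * y ^ (s.card - t.card) = (x + y) ^ s.card := by
  have h := Finset.prod_add (fun _ : γ => x) (fun _ => y) s
  simp only [Finset.prod_const] at h
  calc ∑ t ∈ s.powerset, x ^ t.card * y ^ (s.card - t.card)
      = ∑ t ∈ s.powerset, x ^ t.card * y ^ (s \ t).card := by
        refine Finset.sum_congr rfl fun t ht => ?_
        rw [Finset.card_sdiff_of_subset (Finset.mem_powerset.mp ht)]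
    _ = (x + y) ^ s.card := h.symm

lemma entropy_count {γ : Type*} [DecidableEq γ] (s : Finset γ) {ε : ℝ}
    (h0 : 0 < ε) (h1 : ε < 1/2) (t : ℝ) (ht : t ≤ ε * s.card) :
    (((s.powerset.filter fun S => (S.card : ℝ) ≤ t).card : ℝ))
      * ((ε/(1-ε)) ^ ε * (1-ε)) ^ s.card ≤ 1 := by
  have h1ε : 0 < 1 - ε := by linarith
  set q : ℝ := ε / (1-ε) with hqdef
  have hq0 : 0 < q := div_pos h0 h1ε
  have hq1 : q ≤ 1 := by rw [div_le_one h1ε]; linarith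
  set m := s.card with hm
  have hrho : ((q ^ ε * (1-ε)) ^ m : ℝ) = q ^ (ε * (m:ℝ)) * (1-ε)^m := by
    rw [mul_pow, ← Real.rpow_natCast (q ^ ε) m, ← Real.rpow_mul hq0.le]
  calc (((s.powerset.filter fun S => (S.card : ℝ) ≤ t).card : ℝ))
      * ((ε/(1-ε)) ^ ε * (1-ε)) ^ m
      = ∑ S ∈ (s.powerset.filter fun S => (S.card : ℝ) ≤ t),
          (q ^ ε * (1-ε)) ^ m := by
        rw [Finset.sum_const, nsmul_eq_mul]
    _ ≤ ∑ S ∈ (s.powerset.filter fun S => (S.card : ℝ) ≤ t),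
          ε ^ S.card * (1-ε) ^ (m - S.card) := by
        refine Finset.sum_le_sum fun S hS => ?_
        rw [Finset.mem_filter] at hS
        have hsc : S.card ≤ m := Finset.card_le_card (Finset.mem_powerset.mp hS.1)
        have hterm : q ^ S.card * (1-ε)^m = ε ^ S.card * (1-ε) ^ (m - S.card) := by
          rw [hqdef, div_pow, ← pow_sub_mul_pow (1-ε) hsc]
          field_simp
        rw [hrho, ← hterm]
        have : q ^ (ε * (m:ℝ)) ≤ q ^ ((S.card : ℝ)) :=
          Real.rpow_le_rpow_of_exponent_ge hq0 hq1 (le_trans hS.2 ht)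
        rw [Real.rpow_natCast] at this
        have h2 : (0:ℝ) ≤ (1-ε)^m := by positivity
        exact mul_le_mul_of_nonneg_right this h2
    _ ≤ ∑ S ∈ s.powerset, ε ^ S.card * (1-ε) ^ (m - S.card) := by
        refine Finset.sum_le_sum_of_subset_of_nonneg (Finset.filter_subset _ _)
          fun S _ _ => by positivity
    _ = (ε + (1-ε)) ^ m := sum_powerset_pow s ε (1-ε)
    _ = 1 := by rw [show ε + (1-ε) = 1 by ring, one_pow]

lemma rho_gt_half {ε : ℝ} (h0 : 0 < ε) (h1 : ε < 1/2) :
    1/2 < (ε/(1-ε)) ^ ε * (1-ε) := by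
  have h1ε : 0 < 1 - ε := by linarith
  have hq0 : 0 < ε / (1-ε) := div_pos h0 h1ε
  have hρ : 0 < (ε/(1-ε)) ^ ε * (1-ε) := by positivity
  -- log computations
  have hlogρ : Real.log ((ε/(1-ε)) ^ ε * (1-ε))
      = ε * Real.log ε + (1-ε) * Real.log (1-ε) := by
    rw [Real.log_mul (by positivity) h1ε.ne', Real.log_rpow hq0,
      Real.log_div h0.ne' h1ε.ne']
    ring
  have ha : Real.log (1/(2*ε)) < 1/(2*ε) - 1 :=
    Real.log_lt_sub_one_of_pos (by positivity) (by
      intro h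
      have : 2*ε = 1 := by
        field_simp at h; linarith
      linarith)
  have hb : Real.log (1/(2*(1-ε))) < 1/(2*(1-ε)) - 1 :=
    Real.log_lt_sub_one_of_pos (by positivity) (by
      intro h
      have : 2*(1-ε) = 1 := by
        field_simp at h; linarith
      linarith)
  have hla : Real.log (1/(2*ε)) = -(Real.log 2 + Real.log ε) := by
    rw [one_div, Real.log_inv, Real.log_mul two_ne_zero h0.ne']
  have hlb : Real.log (1/(2*(1-ε))) = -(Real.log 2 + Real.log (1-ε)) := by
    rw [one_div, Real.log_inv, Real.log_mul two_ne_zero h1ε.ne']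
  rw [hla] at ha
  rw [hlb] at hb
  have ha' : ε * (-(Real.log 2 + Real.log ε)) < ε * (1/(2*ε) - 1) :=
    mul_lt_mul_of_pos_left ha h0
  have hb' : (1-ε) * (-(Real.log 2 + Real.log (1-ε))) < (1-ε) * (1/(2*(1-ε)) - 1) :=
    mul_lt_mul_of_pos_left hb h1ε
  have hea : ε * (1/(2*ε) - 1) = 1/2 - ε := by field_simp
  have heb : (1-ε) * (1/(2*(1-ε)) - 1) = 1/2 - (1-ε) := by field_simp
  rw [hea] at ha'
  rw [heb] at hb'
  have hlog : Real.log (1/2) < Real.log ((ε/(1-ε)) ^ ε * (1-ε)) := by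
    rw [hlogρ, one_div, Real.log_inv]
    nlinarith [ha', hb']
  calc (1/2 : ℝ) = Real.exp (Real.log (1/2)) := (Real.exp_log (by norm_num)).symm
    _ < Real.exp (Real.log ((ε/(1-ε)) ^ ε * (1-ε))) := Real.exp_lt_exp.mpr hlog
    _ = (ε/(1-ε)) ^ ε * (1-ε) := Real.exp_log hρ

lemma count_pattern_le {α ι : Type*} [Fintype ι] [DecidableEq ι] [DecidableEq α]
    (P : Finset α) (c : α → ι) (hc : Set.InjOn c ↑P) (v : α → Bool) (t : ℝ) :
    (Finset.univ.filter fun f : ι → Bool =>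
        (((P.filter fun p => f (c p) = v p).card : ℝ) ≤ t)).card ≤
      ((P.image c).powerset.filter fun S => ((S.card : ℝ) ≤ t)).card
        * 2 ^ (Fintype.card ι - P.card) := by
  classical
  set C : Finset ι := P.image c with hC
  have hCcard : C.card = P.card := Finset.card_image_of_injOn hc
  set w : ι → Bool := fun i =>
    if h : ∃ p, p ∈ P ∧ c p = i then !(v (Classical.choose h)) else true with hwdef
  have hw : ∀ p ∈ P, w (c p) = !(v p) := by
    intro p hp
    have h : ∃ p', p' ∈ P ∧ c p' = c p := ⟨p, hp, rfl⟩
    have hch := Classical.choose_spec h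
    have : Classical.choose h = p := hc hch.1 hp hch.2
    simp only [hwdef, dif_pos h, this]
  set T : Finset (Finset ι × Finset ι) :=
    (C.powerset.filter fun S => ((S.card : ℝ) ≤ t)) ×ˢ Cᶜ.powerset with hT
  have hTcard : T.card =
      (C.powerset.filter fun S => ((S.card : ℝ) ≤ t)).card
        * 2 ^ (Fintype.card ι - P.card) := by
    rw [hT, Finset.card_product, Finset.card_powerset, Finset.card_compl, hCcard]
  rw [← hTcard]
  refine Finset.card_le_card_of_injOn
    (fun f => (C.filter (fun i => f i ≠ w i), Cᶜ.filter (fun i => f i ≠ w i)))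
    ?_ ?_
  · -- maps to
    intro f hf
    rw [Finset.mem_coe, Finset.mem_filter] at hf
    rw [Finset.mem_coe, hT, Finset.mem_product]
    refine ⟨Finset.mem_filter.mpr ⟨Finset.mem_powerset.mpr (Finset.filter_subset _ _), ?_⟩,
      Finset.mem_powerset.mpr (Finset.filter_subset _ _)⟩
    -- card equality
    have hcard : (P.filter fun p => f (c p) = v p).card
        = (C.filter (fun i => f i ≠ w i)).card := by
      refine Finset.card_bij (fun p _ => c p) ?_ ?_ ?_
      · intro p hp
        rw [Finset.mem_filter] at hp ⊢
        refine ⟨Finset.mem_image_of_mem c hp.1, ?_⟩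
        rw [hw p hp.1, hp.2]
        cases v p <;> simp
      · intro p₁ hp₁ p₂ hp₂ h
        exact hc (Finset.mem_filter.mp hp₁).1 (Finset.mem_filter.mp hp₂).1 h
      · intro i hi
        rw [Finset.mem_filter] at hi
        obtain ⟨p, hp, hcp⟩ := Finset.mem_image.mp hi.1
        refine ⟨p, Finset.mem_filter.mpr ⟨hp, ?_⟩, hcp⟩
        have := hi.2
        rw [← hcp, hw p hp] at this
        cases hv : v p <;> rw [hv] at this <;> revert this <;>
          cases hfv : f (c p) <;> simp
    rw [← hcard]
    exact hf.2
  · -- injective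
    intro f hf g hg h
    simp only [Prod.mk.injEq] at h
    funext i
    by_cases hi : i ∈ C
    · have := Finset.ext_iff.mp h.1 i
      simp only [Finset.mem_filter, hi, true_and] at this
      by_cases hfw : f i = w i
      · have hgw : g i = w i := by
          by_contra hgw
          exact (this.mpr hgw) hfw
        rw [hfw, hgw]
      · have hgw : g i ≠ w i := this.mp hfw
        cases hwi : w i <;> rw [hwi] at hfw hgw <;>
          simp only [ne_eq, Bool.not_eq_false, Bool.not_eq_true] at hfw hgw <;>
          rw [hfw, hgw]
    · have hi' : i ∈ Cᶜ := Finset.mem_compl.mpr hi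
      have := Finset.ext_iff.mp h.2 i
      simp only [Finset.mem_filter, hi', true_and] at this
      by_cases hfw : f i = w i
      · have hgw : g i = w i := by
          by_contra hgw
          exact (this.mpr hgw) hfw
        rw [hfw, hgw]
      · have hgw : g i ≠ w i := this.mp hfw
        cases hwi : w i <;> rw [hwi] at hfw hgw <;>
          simp only [ne_eq, Bool.not_eq_false, Bool.not_eq_true] at hfw hgw <;>
          rw [hfw, hgw]

lemma edgeCount_eq {N : ℕ} (b : Fin N → Fin N → Bool) (A B : Finset (Fin N))
    (hd : Disjoint A B) :
    edgeCount (tournamentOf b) A B =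
      ((A ×ˢ B).filter fun p => b (min p.1 p.2) (max p.1 p.2) = decide (p.1 < p.2)).card := by
  rw [edgeCount]
  have hset : {p : Fin N × Fin N | p.1 ∈ A ∧ p.2 ∈ B ∧ tournamentOf b p.1 p.2}
      = ↑((A ×ˢ B).filter fun p => b (min p.1 p.2) (max p.1 p.2) = decide (p.1 < p.2)) := by
    ext p
    simp only [Set.mem_setOf_eq, Finset.coe_filter, Finset.mem_product, Set.mem_setOf_eq]
    constructor
    · rintro ⟨h1, h2, h3⟩
      refine ⟨⟨h1, h2⟩, ?_⟩
      rcases h3 with ⟨hlt, hb⟩ | ⟨hlt, hb⟩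
      · simp [min_eq_left hlt.le, max_eq_right hlt.le, hb, hlt]
      · simp [min_eq_right hlt.le, max_eq_left hlt.le, hb, not_lt.mpr hlt.le,
          asymm hlt]
    · rintro ⟨⟨h1, h2⟩, hcond⟩
      refine ⟨h1, h2, ?_⟩
      have hne : p.1 ≠ p.2 := fun he => Finset.disjoint_left.mp hd h1 (he ▸ h2)
      rcases lt_trichotomy p.1 p.2 with hlt | heq | hlt
      · left
        refine ⟨hlt, ?_⟩
        simpa [min_eq_left hlt.le, max_eq_right hlt.le, hlt] using hcond
      · exact absurd heq hne
      · right
        refine ⟨hlt, ?_⟩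
        simpa [min_eq_right hlt.le, max_eq_left hlt.le, not_lt.mpr hlt.le,
          asymm hlt] using hcond
  rw [hset, Set.ncard_coe_finset]

lemma card_filter_curry {N : ℕ} (Q : (Fin N × Fin N → Bool) → Prop) :
    (Finset.univ.filter fun b : Fin N → Fin N → Bool => Q (fun p => b p.1 p.2)).card
      = (Finset.univ.filter Q).card := by
  refine Finset.card_bij' (fun b _ => fun p => b p.1 p.2)
    (fun f _ => fun i j => f (i, j)) ?_ ?_ ?_ ?_
  · intro b hb
    simp only [Finset.mem_filter, Finset.mem_univ, true_and] at hb ⊢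
    exact hb
  · intro f hf
    simp only [Finset.mem_filter, Finset.mem_univ, true_and] at hf ⊢
    exact hf
  · intro b _; rfl
  · intro f _; rfl

lemma inj_minmax {N : ℕ} (A B : Finset (Fin N)) (hd : Disjoint A B) :
    Set.InjOn (fun p : Fin N × Fin N => ((min p.1 p.2, max p.1 p.2) : Fin N × Fin N))
      ↑(A ×ˢ B) := by
  intro p hp p' hp' h
  rw [Finset.mem_coe, Finset.mem_product] at hp hp'
  simp only [Prod.mk.injEq] at h
  obtain ⟨hmin, hmax⟩ := h
  have hAB : ∀ x ∈ A, x ∉ B := fun x hx => Finset.disjoint_left.mp hd hx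
  rcases le_total p.1 p.2 with hle | hge <;> rcases le_total p'.1 p'.2 with hle' | hge'
  · rw [min_eq_left hle, min_eq_left hle'] at hmin
    rw [max_eq_right hle, max_eq_right hle'] at hmax
    exact Prod.ext hmin hmax
  · rw [min_eq_left hle, min_eq_right hge'] at hmin
    exact absurd (hmin ▸ hp'.2) (hAB _ hp.1)
  · rw [min_eq_right hge, min_eq_left hle'] at hmin
    exact absurd (hmin.symm ▸ hp.2) (hAB _ hp'.1)
  · rw [min_eq_right hge, min_eq_right hge'] at hmin
    rw [max_eq_left hge, max_eq_left hge'] at hmax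
    exact Prod.ext hmax hmin

lemma pow_rearrange (ρ : ℝ) (K m : ℕ) (h : m ≤ K) :
    (ρ ^ m)⁻¹ * (2:ℝ) ^ (K - m) = 2 ^ K * ((2 * ρ)⁻¹) ^ m := by
  rw [pow_sub₀ (2:ℝ) two_ne_zero h, inv_pow, mul_pow, mul_inv]
  ring

lemma pair_bound {N : ℕ} {ε : ℝ} (h0 : 0 < ε) (h1 : ε < 1/2)
    (A B : Finset (Fin N)) (hd : Disjoint A B) :
    ((Finset.univ.filter fun b : Fin N → Fin N → Bool =>
        ((edgeCount (tournamentOf b) A B : ℝ) < ε * A.card * B.card)).card : ℝ)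
      ≤ (2:ℝ) ^ (N*N) * ((2 * ((ε/(1-ε)) ^ ε * (1-ε)))⁻¹) ^ (A.card * B.card) := by
  have h1ε : 0 < 1 - ε := by linarith
  set ρ : ℝ := (ε/(1-ε)) ^ ε * (1-ε) with hρdef
  have hρ0 : 0 < ρ := by positivity
  set t : ℝ := ε * A.card * B.card with htdef
  set c : Fin N × Fin N → Fin N × Fin N := fun p => (min p.1 p.2, max p.1 p.2) with hc
  set v : Fin N × Fin N → Bool := fun p => decide (p.1 < p.2) with hv
  set P : Finset (Fin N × Fin N) := A ×ˢ B with hP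
  set Q : (Fin N × Fin N → Bool) → Prop := fun f =>
    (((P.filter fun p => f (c p) = v p).card : ℝ) ≤ t) with hQ
  have hinj : Set.InjOn c ↑P := inj_minmax A B hd
  have hsub : (Finset.univ.filter fun b : Fin N → Fin N → Bool =>
        ((edgeCount (tournamentOf b) A B : ℝ) < ε * A.card * B.card))
      ⊆ (Finset.univ.filter fun b : Fin N → Fin N → Bool => Q (fun p => b p.1 p.2)) := by
    intro b hb
    simp only [Finset.mem_filter, Finset.mem_univ, true_and] at hb ⊢
    rw [edgeCount_eq b A B hd] at hb
    exact le_of_lt hb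
  have hm : P.card = A.card * B.card := Finset.card_product A B
  have hmK : P.card ≤ Fintype.card (Fin N × Fin N) := Finset.card_le_univ P
  have hK : Fintype.card (Fin N × Fin N) = N * N := by simp
  -- nat chain
  have hnat : (Finset.univ.filter fun b : Fin N → Fin N → Bool =>
        ((edgeCount (tournamentOf b) A B : ℝ) < ε * A.card * B.card)).card
      ≤ ((P.image c).powerset.filter fun S => ((S.card : ℝ) ≤ t)).card
        * 2 ^ (Fintype.card (Fin N × Fin N) - P.card) := by
    calc (Finset.univ.filter fun b : Fin N → Fin N → Bool =>
        ((edgeCount (tournamentOf b) A B : ℝ) < ε * A.card * B.card)).card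
        ≤ (Finset.univ.filter fun b : Fin N → Fin N → Bool => Q (fun p => b p.1 p.2)).card :=
          Finset.card_le_card hsub
      _ = (Finset.univ.filter Q).card := card_filter_curry Q
      _ ≤ _ := count_pattern_le P c hinj v t
  -- entropy bound
  have hscard : (P.image c).card = P.card := Finset.card_image_of_injOn hinj
  have hent : ((((P.image c).powerset.filter fun S => ((S.card : ℝ) ≤ t)).card : ℝ))
      * ρ ^ P.card ≤ 1 := by
    have := entropy_count (P.image c) h0 h1 t (by
      rw [hscard, hm, htdef]
      push_cast
      ring_nf
      exact le_refl _)
    rwa [hscard] at this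
  have hpow : (0:ℝ) < ρ ^ P.card := pow_pos hρ0 _
  have hcountS : ((((P.image c).powerset.filter fun S => ((S.card : ℝ) ≤ t)).card : ℝ))
      ≤ (ρ ^ P.card)⁻¹ := by
    calc ((((P.image c).powerset.filter fun S => ((S.card : ℝ) ≤ t)).card : ℝ))
        = ((((P.image c).powerset.filter fun S => ((S.card : ℝ) ≤ t)).card : ℝ))
            * ρ ^ P.card * (ρ ^ P.card)⁻¹ := by field_simp
      _ ≤ 1 * (ρ ^ P.card)⁻¹ := by
          exact mul_le_mul_of_nonneg_right hent (by positivity)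
      _ = (ρ ^ P.card)⁻¹ := one_mul _
  calc ((Finset.univ.filter fun b : Fin N → Fin N → Bool =>
        ((edgeCount (tournamentOf b) A B : ℝ) < ε * A.card * B.card)).card : ℝ)
      ≤ ((((P.image c).powerset.filter fun S => ((S.card : ℝ) ≤ t)).card
        * 2 ^ (Fintype.card (Fin N × Fin N) - P.card) : ℕ) : ℝ) := by exact_mod_cast hnat
    _ = ((((P.image c).powerset.filter fun S => ((S.card : ℝ) ≤ t)).card : ℝ))
        * (2:ℝ) ^ (Fintype.card (Fin N × Fin N) - P.card) := by push_cast; ring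
    _ ≤ (ρ ^ P.card)⁻¹ * (2:ℝ) ^ (Fintype.card (Fin N × Fin N) - P.card) :=
        mul_le_mul_of_nonneg_right hcountS (by positivity)
    _ = (2:ℝ) ^ (N*N) * ((2 * ρ)⁻¹) ^ (A.card * B.card) := by
        rw [pow_rearrange ρ _ _ hmK, hK, hm]

lemma term_bound {N a b : ℕ} {β k : ℝ} (hβ : 1 < β) (hN : 1 < (N:ℝ))
    (hklog : 4 * Real.logb 2 N ≤ k * Real.logb 2 β)
    (hk : 1 ≤ k) (ha : k ≤ a) (hb : k ≤ b) :
    (β⁻¹) ^ (a*b) ≤ ((N:ℝ)⁻¹) * (((N:ℝ)⁻¹)^a * ((N:ℝ)⁻¹)^b) := by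
  have hβ0 : (0:ℝ) < β := lt_trans one_pos hβ
  have hN0 : (0:ℝ) < N := lt_trans one_pos hN
  have hrw : (β⁻¹) ^ (a*b) = β ^ (-((a*b : ℕ):ℝ)) := by
    rw [Real.rpow_neg hβ0.le, Real.rpow_natCast, inv_pow]
  have hab : k * ((a:ℝ) + b) / 2 ≤ ((a*b : ℕ):ℝ) := by
    push_cast
    have h1 : k * b ≤ (a:ℝ) * b := mul_le_mul_of_nonneg_right ha (by positivity)
    have h2 : k * a ≤ (a:ℝ) * b := by
      calc k * a ≤ (b:ℝ) * a := mul_le_mul_of_nonneg_right hb (by positivity)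
        _ = (a:ℝ) * b := by ring
    linarith
  have hab2 : (2:ℝ) ≤ (a:ℝ) + b := by
    have h1 : (1:ℝ) ≤ a := le_trans hk ha
    have h2 : (1:ℝ) ≤ b := le_trans hk hb
    linarith
  have step1 : β ^ (-((a*b : ℕ):ℝ)) ≤ β ^ (-(k * ((a:ℝ) + b) / 2)) :=
    Real.rpow_le_rpow_of_exponent_le hβ.le (by linarith)
  have hβrw : β = (2:ℝ) ^ (Real.logb 2 β) := (Real.rpow_logb two_pos (by norm_num) hβ0).symm
  have hLN : (0:ℝ) < Real.logb 2 N := Real.logb_pos one_lt_two hN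
  have step2 : β ^ (-(k * ((a:ℝ) + b) / 2)) ≤ (2:ℝ) ^ ((-(2 * ((a:ℝ) + b))) * Real.logb 2 N) := by
    calc β ^ (-(k * ((a:ℝ) + b) / 2))
        = (2:ℝ) ^ (Real.logb 2 β * (-(k * ((a:ℝ) + b) / 2))) := by
          rw [Real.rpow_mul (by norm_num : (0:ℝ) ≤ 2), ← hβrw]
      _ ≤ (2:ℝ) ^ ((-(2 * ((a:ℝ) + b))) * Real.logb 2 N) := by
          apply Real.rpow_le_rpow_of_exponent_le one_le_two
          nlinarith [mul_le_mul_of_nonneg_left hklog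
            (by positivity : (0:ℝ) ≤ ((a:ℝ)+b)/2)]
  have hNrw : (N:ℝ) = (2:ℝ) ^ (Real.logb 2 N) := (Real.rpow_logb two_pos (by norm_num) hN0).symm
  have step3 : (2:ℝ) ^ ((-(2 * ((a:ℝ) + b))) * Real.logb 2 N)
      ≤ ((N:ℝ)⁻¹) * (((N:ℝ)⁻¹)^a * ((N:ℝ)⁻¹)^b) := by
    have e1 : (2:ℝ) ^ ((-(2 * ((a:ℝ) + b))) * Real.logb 2 N)
        = (N:ℝ) ^ (-(2 * ((a:ℝ) + b))) := by
      rw [mul_comm, Real.rpow_mul (by norm_num : (0:ℝ) ≤ 2), ← hNrw]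
    have e2 : (N:ℝ) ^ (-(2 * ((a:ℝ) + b))) ≤ (N:ℝ) ^ (-(1 + ((a:ℝ) + b))) :=
      Real.rpow_le_rpow_of_exponent_le hN.le (by linarith)
    have e3 : (N:ℝ) ^ (-(1 + ((a:ℝ) + b))) = ((N:ℝ)⁻¹) * (((N:ℝ)⁻¹)^a * ((N:ℝ)⁻¹)^b) := by
      rw [Real.rpow_neg hN0.le, show (1:ℝ) + ((a:ℝ) + b) = 1 + (a:ℝ) + (b:ℝ) by ring,
        Real.rpow_add hN0, Real.rpow_add hN0, Real.rpow_one,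
        Real.rpow_natCast, Real.rpow_natCast, mul_inv, mul_inv, inv_pow, inv_pow]
      ring
    rw [e1, ← e3]
    exact e2
  calc (β⁻¹) ^ (a*b) = β ^ (-((a*b : ℕ):ℝ)) := hrw
    _ ≤ β ^ (-(k * ((a:ℝ) + b) / 2)) := step1
    _ ≤ (2:ℝ) ^ ((-(2 * ((a:ℝ) + b))) * Real.logb 2 N) := step2
    _ ≤ ((N:ℝ)⁻¹) * (((N:ℝ)⁻¹)^a * ((N:ℝ)⁻¹)^b) := step3

lemma sum_inv_pow {N : ℕ} (hN : 1 ≤ N) :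
    ∑ A ∈ (Finset.univ : Finset (Fin N)).powerset, ((N:ℝ)⁻¹) ^ A.card ≤ 3 := by
  have hN0 : (0:ℝ) < N := by exact_mod_cast hN
  have key : ∑ A ∈ (Finset.univ : Finset (Fin N)).powerset, ((N:ℝ)⁻¹) ^ A.card
      = ((N:ℝ)⁻¹ + 1) ^ N := by
    have := sum_powerset_pow (Finset.univ : Finset (Fin N)) ((N:ℝ)⁻¹) 1
    simpa [Finset.card_univ] using this
  rw [key]
  calc ((N:ℝ)⁻¹ + 1) ^ N ≤ (Real.exp ((N:ℝ)⁻¹)) ^ N := by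
        apply pow_le_pow_left₀ (by positivity)
        have := Real.add_one_le_exp ((N:ℝ)⁻¹)
        linarith
    _ = Real.exp ((N:ℕ) * (N:ℝ)⁻¹) := by rw [Real.exp_nat_mul]
    _ = Real.exp 1 := by
        congr 1
        field_simp
    _ ≤ 3 := by
        have := Real.exp_one_lt_d9
        linarith

lemma fail_bound {N : ℕ} {ε k : ℝ} (h0 : 0 < ε) (h1 : ε < 1/2) (hN : 1 < (N:ℝ)) (hk : 1 ≤ k)
    (hklog : 4 * Real.logb 2 N ≤ k * Real.logb 2 (2 * ((ε/(1-ε)) ^ ε * (1-ε)))) :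
    ((Finset.univ.filter fun b : Fin N → Fin N → Bool =>
        ¬ Pseudorandom (tournamentOf b) ε k).card : ℝ)
      ≤ 9 * (2:ℝ)^(N*N) * ((N:ℝ)⁻¹) := by
  have hN0 : (0:ℝ) < N := lt_trans one_pos hN
  have hN1 : 1 ≤ N := by exact_mod_cast hN.le
  set β : ℝ := 2 * ((ε/(1-ε)) ^ ε * (1-ε)) with hβdef
  have hβ : 1 < β := by
    have := rho_gt_half h0 h1
    rw [hβdef]; linarith
  set D : Finset (Finset (Fin N) × Finset (Fin N)) :=
    ((Finset.univ : Finset (Fin N)).powerset ×ˢ (Finset.univ : Finset (Fin N)).powerset).filter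
      (fun AB => Disjoint AB.1 AB.2 ∧ k ≤ (AB.1.card : ℝ) ∧ k ≤ (AB.2.card : ℝ)) with hD
  have hsub : (Finset.univ.filter fun b : Fin N → Fin N → Bool =>
        ¬ Pseudorandom (tournamentOf b) ε k)
      ⊆ D.biUnion (fun AB => Finset.univ.filter fun b =>
          ((edgeCount (tournamentOf b) AB.1 AB.2 : ℝ) < ε * AB.1.card * AB.2.card)) := by
    intro b hb
    simp only [Finset.mem_filter, Finset.mem_univ, true_and] at hb
    rw [Pseudorandom] at hb
    push_neg at hb
    obtain ⟨A, B, hd, hA, hB, hlt⟩ := hb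
    refine Finset.mem_biUnion.mpr ⟨(A, B), ?_, ?_⟩
    · rw [hD, Finset.mem_filter, Finset.mem_product]
      exact ⟨⟨Finset.mem_powerset.mpr (Finset.subset_univ A),
        Finset.mem_powerset.mpr (Finset.subset_univ B)⟩, hd, hA, hB⟩
    · simp only [Finset.mem_filter, Finset.mem_univ, true_and]
      exact hlt
  calc ((Finset.univ.filter fun b : Fin N → Fin N → Bool =>
        ¬ Pseudorandom (tournamentOf b) ε k).card : ℝ)
      ≤ ((∑ AB ∈ D, (Finset.univ.filter fun b : Fin N → Fin N → Bool =>
          ((edgeCount (tournamentOf b) AB.1 AB.2 : ℝ)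
            < ε * AB.1.card * AB.2.card)).card : ℕ) : ℝ) := by
        exact_mod_cast le_trans (Finset.card_le_card hsub) Finset.card_biUnion_le
    _ = ∑ AB ∈ D, ((Finset.univ.filter fun b : Fin N → Fin N → Bool =>
          ((edgeCount (tournamentOf b) AB.1 AB.2 : ℝ)
            < ε * AB.1.card * AB.2.card)).card : ℝ) := by push_cast; rfl
    _ ≤ ∑ AB ∈ D, (2:ℝ)^(N*N) * (β⁻¹) ^ (AB.1.card * AB.2.card) := by
        refine Finset.sum_le_sum fun AB hAB => ?_
        rw [hD, Finset.mem_filter] at hAB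
        exact pair_bound h0 h1 AB.1 AB.2 hAB.2.1
    _ ≤ ∑ AB ∈ D, (2:ℝ)^(N*N) *
          (((N:ℝ)⁻¹) * (((N:ℝ)⁻¹)^AB.1.card * ((N:ℝ)⁻¹)^AB.2.card)) := by
        refine Finset.sum_le_sum fun AB hAB => ?_
        rw [hD, Finset.mem_filter] at hAB
        refine mul_le_mul_of_nonneg_left ?_ (by positivity)
        exact term_bound hβ hN hklog hk hAB.2.2.1 hAB.2.2.2
    _ = (2:ℝ)^(N*N) * ((N:ℝ)⁻¹) *
          ∑ AB ∈ D, (((N:ℝ)⁻¹)^AB.1.card * ((N:ℝ)⁻¹)^AB.2.card) := by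
        rw [Finset.mul_sum]
        refine Finset.sum_congr rfl fun AB _ => by ring
    _ ≤ (2:ℝ)^(N*N) * ((N:ℝ)⁻¹) *
          ∑ AB ∈ (Finset.univ : Finset (Fin N)).powerset ×ˢ
              (Finset.univ : Finset (Fin N)).powerset,
            (((N:ℝ)⁻¹)^AB.1.card * ((N:ℝ)⁻¹)^AB.2.card) := by
        refine mul_le_mul_of_nonneg_left ?_ (by positivity)
        refine Finset.sum_le_sum_of_subset_of_nonneg ?_ (fun _ _ _ => by positivity)
        rw [hD]; exact Finset.filter_subset _ _
    _ = (2:ℝ)^(N*N) * ((N:ℝ)⁻¹) *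
          ((∑ A ∈ (Finset.univ : Finset (Fin N)).powerset, ((N:ℝ)⁻¹)^A.card)
            * (∑ B ∈ (Finset.univ : Finset (Fin N)).powerset, ((N:ℝ)⁻¹)^B.card)) := by
        rw [Finset.sum_mul_sum]
        rw [Finset.sum_product]
    _ ≤ (2:ℝ)^(N*N) * ((N:ℝ)⁻¹) * (3 * 3) := by
        have hs := sum_inv_pow (N := N) hN1
        refine mul_le_mul_of_nonneg_left ?_ (by positivity)
        have hnn : (0:ℝ) ≤ ∑ A ∈ (Finset.univ : Finset (Fin N)).powerset, ((N:ℝ)⁻¹)^A.card :=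
          Finset.sum_nonneg fun _ _ => by positivity
        exact mul_le_mul hs hs hnn (by norm_num)
    _ = 9 * (2:ℝ)^(N*N) * ((N:ℝ)⁻¹) := by ring

end Aux

/-- For every `0 < ε < 1/2` there exists `σ > 0` such that, with high probability,
the random tournament on `N` vertices is `(ε, σ·log₂ N)`-pseudorandom. -/
theorem stmt1 (ε : ℝ) (hε0 : 0 < ε) (hε : ε < 1 / 2) :
    ∃ σ : ℝ, 0 < σ ∧
      Filter.Tendsto
        (fun N : ℕ =>
          (((Finset.univ : Finset (Fin N → Fin N → Bool)).filter (fun b =>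
              Pseudorandom (tournamentOf b) ε (σ * Real.logb 2 N))).card : ℝ) /
            (Fintype.card (Fin N → Fin N → Bool) : ℝ))
        Filter.atTop (nhds 1) := by
  have hρ := rho_gt_half hε0 hε
  set β : ℝ := 2 * ((ε/(1-ε)) ^ ε * (1-ε)) with hβdef
  have hβ1 : 1 < β := by rw [hβdef]; linarith
  have hLβ : 0 < Real.logb 2 β := Real.logb_pos one_lt_two hβ1
  refine ⟨4 / Real.logb 2 β, by positivity, ?_⟩
  set σ : ℝ := 4 / Real.logb 2 β with hσdef
  have hσ : 0 < σ := by positivity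
  have htot : ∀ N : ℕ, (Fintype.card (Fin N → Fin N → Bool) : ℝ) = (2:ℝ)^(N*N) := by
    intro N
    have : Fintype.card (Fin N → Fin N → Bool) = 2^(N*N) := by
      rw [Fintype.card_fun, Fintype.card_fun, Fintype.card_bool, Fintype.card_fin, ← pow_mul]
    rw [this]
    push_cast
    rfl
  -- ratio identity
  have hratio : ∀ N : ℕ,
      (((Finset.univ : Finset (Fin N → Fin N → Bool)).filter (fun b =>
          Pseudorandom (tournamentOf b) ε (σ * Real.logb 2 N))).card : ℝ) /
        (Fintype.card (Fin N → Fin N → Bool) : ℝ)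
      = 1 - (((Finset.univ : Finset (Fin N → Fin N → Bool)).filter (fun b =>
          ¬ Pseudorandom (tournamentOf b) ε (σ * Real.logb 2 N))).card : ℝ) / (2:ℝ)^(N*N) := by
    intro N
    have hsum := Finset.card_filter_add_card_filter_not
      (s := (Finset.univ : Finset (Fin N → Fin N → Bool)))
      (p := fun b => Pseudorandom (tournamentOf b) ε (σ * Real.logb 2 N))
    have hc : ((Finset.univ : Finset (Fin N → Fin N → Bool)).card : ℝ) = (2:ℝ)^(N*N) := by
      rw [Finset.card_univ]; exact htot N
    have hpos : (0:ℝ) < (2:ℝ)^(N*N) := by positivity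
    have hsumR : (((Finset.univ : Finset (Fin N → Fin N → Bool)).filter (fun b =>
          Pseudorandom (tournamentOf b) ε (σ * Real.logb 2 N))).card : ℝ)
        + (((Finset.univ : Finset (Fin N → Fin N → Bool)).filter (fun b =>
          ¬ Pseudorandom (tournamentOf b) ε (σ * Real.logb 2 N))).card : ℝ)
        = (2:ℝ)^(N*N) := by
      rw [← hc]
      exact_mod_cast congrArg (Nat.cast : ℕ → ℝ) hsum
    rw [htot N]
    field_simp
    linarith
  simp only [hratio]
  -- suffices: failure ratio tends to 0
  have hfail : Filter.Tendsto (fun N : ℕ =>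
      (((Finset.univ : Finset (Fin N → Fin N → Bool)).filter (fun b =>
          ¬ Pseudorandom (tournamentOf b) ε (σ * Real.logb 2 N))).card : ℝ) / (2:ℝ)^(N*N))
      Filter.atTop (nhds 0) := by
    have hup : Filter.Tendsto (fun N : ℕ => 9 * ((N:ℝ)⁻¹)) Filter.atTop (nhds 0) := by
      have := Filter.Tendsto.const_mul (9:ℝ)
        (tendsto_inv_atTop_zero.comp tendsto_natCast_atTop_atTop)
      simpa using this
    refine tendsto_of_tendsto_of_tendsto_of_le_of_le' tendsto_const_nhds hup ?_ ?_
    · exact Filter.Eventually.of_forall fun N => by positivity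
    · -- eventually F N ≤ 9/N
      have hlog : Filter.Tendsto (fun N : ℕ => Real.logb 2 (N:ℝ)) Filter.atTop Filter.atTop :=
        (Real.tendsto_logb_atTop one_lt_two).comp tendsto_natCast_atTop_atTop
      have h1 : ∀ᶠ N : ℕ in Filter.atTop, 1/σ ≤ Real.logb 2 (N:ℝ) :=
        hlog.eventually_ge_atTop (1/σ)
      have h2 : ∀ᶠ N : ℕ in Filter.atTop, 2 ≤ N := Filter.eventually_ge_atTop 2
      filter_upwards [h1, h2] with N hN1 hN2
      have hNR : 1 < (N:ℝ) := by exact_mod_cast Nat.lt_of_lt_of_le one_lt_two hN2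
      have hk : 1 ≤ σ * Real.logb 2 (N:ℝ) := by
        calc (1:ℝ) = σ * (1/σ) := by field_simp
          _ ≤ σ * Real.logb 2 (N:ℝ) := mul_le_mul_of_nonneg_left hN1 hσ.le
      have hklog : 4 * Real.logb 2 (N:ℝ)
          ≤ (σ * Real.logb 2 (N:ℝ)) * Real.logb 2 β := by
        rw [hσdef]
        field_simp
        exact le_rfl
      have hb := fail_bound hε0 hε hNR hk hklog
      rw [div_le_iff₀ (by positivity : (0:ℝ) < (2:ℝ)^(N*N))]
      calc (((Finset.univ : Finset (Fin N → Fin N → Bool)).filter (fun b =>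
          ¬ Pseudorandom (tournamentOf b) ε (σ * Real.logb 2 N))).card : ℝ)
          ≤ 9 * (2:ℝ)^(N*N) * ((N:ℝ)⁻¹) := hb
        _ = 9 * ((N:ℝ)⁻¹) * (2:ℝ)^(N*N) := by ring
  have := Filter.Tendsto.const_sub (1:ℝ) hfail
  simpa using this
end

section
/- Let 0 < ε < 1/2 and σ > 0, and let G be an (ε, σ log N)-pseudorandom tournament on N vertices whose edges are 2-coloured red and blue. Suppose U ⊆ V(G) satisfies: (i) the induced subgraph G[U] has at most (ε²/32)|U|² blue edges, and (ii) (ε/4)|U| ≥ σ log N. Then G contains a red copy of every oriented tree on at most (ε/4)|U| vertices. -/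
open Classical

/-- A tournament: an orientation of the complete graph. -/
def IsTournament {V : Type*} (R : V → V → Prop) : Prop :=
  (∀ u v, R u v → ¬ R v u) ∧ (∀ u v : V, u ≠ v → R u v ∨ R v u)

/-- An oriented tree: an asymmetric relation whose underlying (symmetrised) graph is a tree. -/
def IsOrientedTree {W : Type*} (T : W → W → Prop) : Prop :=
  (∀ u v, T u v → ¬ T v u) ∧ (SimpleGraph.fromRel T).IsTree

/-- A copy of the oriented graph `T` inside the oriented graph `R`, all of whose edges
receive the colour `b` under the edge-colouring `col` (red = `true`, blue = `false`). -/
def ColCopy {V W : Type*} (R : V → V → Prop) (col : V → V → Bool) (b : Bool)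
    (T : W → W → Prop) : Prop :=
  ∃ f : W → V, Function.Injective f ∧ ∀ u v, T u v → R (f u) (f v) ∧ col (f u) (f v) = b

lemma edgeCount_eq_card {V : Type*} (R : V → V → Prop) (A B : Finset V) :
    edgeCount R A B = ((A ×ˢ B).filter fun p => R p.1 p.2).card := by
  classical
  have h1 : {p : V × V | p.1 ∈ A ∧ p.2 ∈ B ∧ R p.1 p.2} =
      ↑((A ×ˢ B).filter fun p => R p.1 p.2) := by
    ext ⟨x, y⟩
    simp [Finset.mem_filter, Finset.mem_product, and_assoc]
  rw [edgeCount, h1, Set.ncard_coe_finset]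

lemma edgeCount_eq_sum_out {V : Type*} (R : V → V → Prop) (A B : Finset V) :
    edgeCount R A B = ∑ x ∈ A, (B.filter fun y => R x y).card := by
  classical
  rw [edgeCount_eq_card, Finset.card_filter, Finset.sum_product]
  exact Finset.sum_congr rfl fun x _ => (Finset.card_filter _ _).symm

lemma edgeCount_eq_sum_in {V : Type*} (R : V → V → Prop) (A B : Finset V) :
    edgeCount R A B = ∑ y ∈ B, (A.filter fun x => R x y).card := by
  classical
  rw [edgeCount_eq_card, Finset.card_filter, Finset.sum_product_right]
  exact Finset.sum_congr rfl fun y _ => (Finset.card_filter _ _).symm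

lemma sum_in_eq_sum_out {V : Type*} (Q : V → V → Prop) [∀ x y, Decidable (Q x y)] (U : Finset V) :
    ∑ x ∈ U, (U.filter fun y => Q y x).card = ∑ x ∈ U, (U.filter fun y => Q x y).card := by
  classical
  have h1 : ∑ x ∈ U, (U.filter fun y => Q y x).card
      = ((U ×ˢ U).filter fun p => Q p.2 p.1).card := by
    rw [Finset.card_filter, Finset.sum_product]
    exact Finset.sum_congr rfl fun x _ => Finset.card_filter _ _
  have h2 : ∑ x ∈ U, (U.filter fun y => Q x y).card
      = ((U ×ˢ U).filter fun p => Q p.1 p.2).card := by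
    rw [Finset.card_filter, Finset.sum_product]
    exact Finset.sum_congr rfl fun x _ => Finset.card_filter _ _
  rw [h1, h2]
  apply Finset.card_bij' (fun p _ => Prod.swap p) (fun p _ => Prod.swap p) <;>
    simp only [Finset.mem_filter, Finset.mem_product, Prod.fst_swap, Prod.snd_swap,
      Prod.swap_swap, implies_true, and_imp, Prod.forall] <;>
    tauto

/-- One step of the peeling process: remove a vertex of small red out- or in-degree
from the first component, recording it in the second or third component. -/
noncomputable def peelStep {V : Type*} [DecidableEq V] (m : ℕ) (dout din : Finset V → V → ℕ) :
    Finset V × Finset V × Finset V → Finset V × Finset V × Finset V := fun st =>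
  if h : ∃ x ∈ st.1, dout st.1 x < m ∨ din st.1 x < m then
    if dout st.1 h.choose < m then (st.1.erase h.choose, insert h.choose st.2.1, st.2.2)
    else (st.1.erase h.choose, st.2.1, insert h.choose st.2.2)
  else st

lemma contra_aux {V : Type*} (ε k : ℝ) (m : ℕ)
    (hε0 : 0 < ε) (hε : ε < 1 / 2)
    (R : V → V → Prop) (col : V → V → Bool) (U W : Finset V)
    (hpr : Pseudorandom R ε k) (hk1 : 1 < k)
    (hkn : k ≤ ε / 4 * U.card) (hmn : (m : ℝ) ≤ ε / 4 * U.card)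
    (hn16 : (16 : ℝ) < U.card)
    (hWblue : ∀ x ∈ W,
      (((U.filter fun y => R x y ∧ col x y = false).card : ℝ) ≤ ε * U.card / 8) ∧
      (((U.filter fun y => R y x ∧ col y x = false).card : ℝ) ≤ ε * U.card / 8))
    (A B : Finset V) (hdisj : Disjoint A B) (hkA : k ≤ (A.card : ℝ))
    (hB3 : 3 * (U.card : ℝ) / 8 < (B.card : ℝ)) (hBU : B ⊆ U)
    (hA : (∀ x ∈ A, x ∈ W ∧ (B.filter fun y => R x y ∧ col x y = true).card < m) ∨
          (∀ x ∈ A, x ∈ W ∧ (B.filter fun y => R y x ∧ col y x = true).card < m)) :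
    False := by
  classical
  set n : ℝ := (U.card : ℝ) with hn
  have hn0 : (0:ℝ) < n := by rw [hn]; linarith
  have hkB : k ≤ (B.card : ℝ) := by nlinarith
  have hA0 : (0:ℝ) < (A.card : ℝ) := lt_of_lt_of_le (by linarith) hkA
  have main : ∀ (G : V → V → Prop), (∀ x ∈ A, ((B.filter fun y => G x y).card : ℝ)
      ≤ (m : ℝ) - 1 + ε * n / 8) →
      (ε * A.card * B.card ≤ ∑ x ∈ A, ((B.filter fun y => G x y).card : ℝ)) → False := by
    intro G hbd hlow
    have hup : ∑ x ∈ A, ((B.filter fun y => G x y).card : ℝ)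
        ≤ (A.card : ℝ) * ((m : ℝ) - 1 + ε * n / 8) := by
      calc ∑ x ∈ A, ((B.filter fun y => G x y).card : ℝ)
          ≤ ∑ _x ∈ A, ((m : ℝ) - 1 + ε * n / 8) := Finset.sum_le_sum hbd
        _ = (A.card : ℝ) * ((m : ℝ) - 1 + ε * n / 8) := by
            rw [Finset.sum_const, nsmul_eq_mul]
    have h3 : ε * (B.card : ℝ) ≤ (m : ℝ) - 1 + ε * n / 8 := by
      have h4 : ε * A.card * B.card ≤ (A.card : ℝ) * ((m : ℝ) - 1 + ε * n / 8) :=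
        le_trans hlow hup
      nlinarith
    nlinarith
  have splitcard : ∀ (G : V → V → Prop) (C : V → V → Bool) (x : V),
      ((B.filter fun y => G x y ∧ C x y = true).card < m) →
      (((B.filter fun y => G x y ∧ C x y = false).card : ℝ) ≤ ε * n / 8) →
      ((B.filter fun y => G x y).card : ℝ) ≤ (m : ℝ) - 1 + ε * n / 8 := by
    intro G C x hred hblue2
    have hsplit : (B.filter fun y => G x y).card
        ≤ (B.filter fun y => G x y ∧ C x y = true).card
          + (B.filter fun y => G x y ∧ C x y = false).card := by
      refine le_trans (Finset.card_le_card ?_) (Finset.card_union_le _ _)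
      intro y hy
      rw [Finset.mem_filter] at hy
      rcases Bool.dichotomy (C x y) with hc | hc
      · exact Finset.mem_union_right _ (Finset.mem_filter.mpr ⟨hy.1, hy.2, hc⟩)
      · exact Finset.mem_union_left _ (Finset.mem_filter.mpr ⟨hy.1, hy.2, hc⟩)
    have h5 : ((B.filter fun y => G x y ∧ C x y = true).card : ℝ) ≤ (m : ℝ) - 1 := by
      have h6 : (B.filter fun y => G x y ∧ C x y = true).card + 1 ≤ m := hred
      have h7 := (Nat.cast_le (α := ℝ)).mpr h6
      push_cast at h7
      linarith
    calc ((B.filter fun y => G x y).card : ℝ)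
        ≤ ((B.filter fun y => G x y ∧ C x y = true).card : ℝ)
          + ((B.filter fun y => G x y ∧ C x y = false).card : ℝ) := by exact_mod_cast hsplit
      _ ≤ (m : ℝ) - 1 + ε * n / 8 := add_le_add h5 hblue2
  rcases hA with hA | hA
  · refine main (fun x y => R x y) ?_ ?_
    · intro x hx
      obtain ⟨hxW, hxd⟩ := hA x hx
      refine splitcard (fun x y => R x y) (fun x y => col x y) x hxd ?_
      calc ((B.filter fun y => R x y ∧ col x y = false).card : ℝ)
          ≤ ((U.filter fun y => R x y ∧ col x y = false).card : ℝ) := by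
            exact_mod_cast Finset.card_le_card (Finset.filter_subset_filter _ hBU)
        _ ≤ ε * n / 8 := (hWblue x hxW).1
    · have h1 := hpr A B hdisj hkA hkB
      rw [edgeCount_eq_sum_out] at h1
      calc ε * A.card * B.card ≤ ((∑ x ∈ A, (B.filter fun y => R x y).card : ℕ) : ℝ) := h1
        _ = ∑ x ∈ A, ((B.filter fun y => R x y).card : ℝ) := by push_cast; ring
  · refine main (fun x y => R y x) ?_ ?_
    · intro x hx
      obtain ⟨hxW, hxd⟩ := hA x hx
      refine splitcard (fun x y => R y x) (fun x y => col y x) x hxd ?_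
      calc ((B.filter fun y => R y x ∧ col y x = false).card : ℝ)
          ≤ ((U.filter fun y => R y x ∧ col y x = false).card : ℝ) := by
            exact_mod_cast Finset.card_le_card (Finset.filter_subset_filter _ hBU)
        _ ≤ ε * n / 8 := (hWblue x hxW).2
    · have h1 := hpr B A hdisj.symm hkB hkA
      rw [edgeCount_eq_sum_in] at h1
      calc ε * A.card * B.card = ε * B.card * A.card := by ring
        _ ≤ ((∑ x ∈ A, (B.filter fun y => R y x).card : ℕ) : ℝ) := h1
        _ = ∑ x ∈ A, ((B.filter fun y => R y x).card : ℝ) := by push_cast; ring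


lemma exists_good_subset {V : Type*} (ε k : ℝ) (m : ℕ)
    (hε0 : 0 < ε) (hε : ε < 1 / 2)
    (R : V → V → Prop) (col : V → V → Bool) (U W : Finset V)
    (hpr : Pseudorandom R ε k) (hk1 : 1 < k)
    (hkn : k ≤ ε / 4 * U.card) (hmn : (m : ℝ) ≤ ε / 4 * U.card)
    (hn16 : (16 : ℝ) < U.card)
    (hWsub : W ⊆ U)
    (hWcard : (U.card : ℝ) - ε * U.card / 2 ≤ (W.card : ℝ))
    (hWblue : ∀ x ∈ W,
      (((U.filter fun y => R x y ∧ col x y = false).card : ℝ) ≤ ε * U.card / 8) ∧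
      (((U.filter fun y => R y x ∧ col y x = false).card : ℝ) ≤ ε * U.card / 8)) :
    ∃ Good : Finset V, Good.Nonempty ∧
      ∀ x ∈ Good, m ≤ (Good.filter fun y => R x y ∧ col x y = true).card ∧
                  m ≤ (Good.filter fun y => R y x ∧ col y x = true).card := by
  classical
  set n : ℝ := (U.card : ℝ) with hn
  have hn0 : (0:ℝ) < n := by rw [hn]; linarith
  set dout : Finset V → V → ℕ :=
    fun S x => (S.filter fun y => R x y ∧ col x y = true).card with hdout
  set din : Finset V → V → ℕ :=
    fun S x => (S.filter fun y => R y x ∧ col y x = true).card with hdin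
  have doutMono : ∀ (S S' : Finset V) (x : V), S ⊆ S' → dout S x ≤ dout S' x :=
    fun S S' x h => Finset.card_le_card (Finset.filter_subset_filter _ h)
  have dinMono : ∀ (S S' : Finset V) (x : V), S ⊆ S' → din S x ≤ din S' x :=
    fun S S' x h => Finset.card_le_card (Finset.filter_subset_filter _ h)
  set it : ℕ → Finset V × Finset V × Finset V :=
    fun t => (peelStep m dout din)^[t] (W, ∅, ∅) with hit
  have hit0 : it 0 = (W, ∅, ∅) := rfl
  have hitS : ∀ t, it (t + 1) = peelStep m dout din (it t) :=
    fun t => Function.iterate_succ_apply' _ _ _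
  -- the invariant
  have hInv : ∀ t, (it t).1 ⊆ W ∧ ((it t).2.1 ∪ (it t).2.2 = W \ (it t).1) ∧
      (∀ x ∈ (it t).2.1, dout (it t).1 x < m) ∧ (∀ x ∈ (it t).2.2, din (it t).1 x < m) ∧
      (((it t).2.1.card : ℝ) < k) ∧ (((it t).2.2.card : ℝ) < k) := by
    intro t
    induction t with
    | zero =>
      rw [hit0]
      refine ⟨subset_rfl, by simp, by simp, by simp, by simp; linarith, by simp; linarith⟩
    | succ t ih =>
      obtain ⟨hS, hUn, hDo, hDi, hcDo, hcDi⟩ := ih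
      rw [hitS]
      by_cases hbad : ∃ x ∈ (it t).1, dout (it t).1 x < m ∨ din (it t).1 x < m
      · set x0 := hbad.choose with hx0
        have hx0spec := hbad.choose_spec
        have hx0S : x0 ∈ (it t).1 := hx0spec.1
        have hx0W : x0 ∈ W := hS hx0S
        have herase_sub : (it t).1.erase x0 ⊆ W := (Finset.erase_subset _ _).trans hS
        have hsdiff : W \ ((it t).1.erase x0) = insert x0 (W \ (it t).1) := by
          ext y
          simp only [Finset.mem_sdiff, Finset.mem_erase, Finset.mem_insert, not_and]
          by_cases hy : y = x0
          · subst hy; simp [hx0W, hx0S]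
          · simp [hy]
        -- common: a lower bound on the cardinality of the erased set
        have hScard : (((it t).1.erase x0).card : ℝ) > 3 * n / 8 := by
          have h1 : W.card ≤ (it t).1.card + ((it t).2.1.card + (it t).2.2.card) := by
            have hsub : W ⊆ (it t).1 ∪ ((it t).2.1 ∪ (it t).2.2) := by
              intro y hy
              rw [hUn]
              by_cases hyS : y ∈ (it t).1
              · exact Finset.mem_union_left _ hyS
              · exact Finset.mem_union_right _ (Finset.mem_sdiff.mpr ⟨hy, hyS⟩)
            calc W.card ≤ ((it t).1 ∪ ((it t).2.1 ∪ (it t).2.2)).card :=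
                  Finset.card_le_card hsub
              _ ≤ (it t).1.card + ((it t).2.1 ∪ (it t).2.2).card := Finset.card_union_le _ _
              _ ≤ (it t).1.card + ((it t).2.1.card + (it t).2.2.card) := by
                  have := Finset.card_union_le (it t).2.1 (it t).2.2
                  omega
          have h2 : ((it t).1.erase x0).card = (it t).1.card - 1 :=
            Finset.card_erase_of_mem hx0S
          have h3 : 1 ≤ (it t).1.card := Finset.card_pos.mpr ⟨x0, hx0S⟩
          have h4 : ((it t).1.card : ℝ) ≥ (W.card : ℝ) - ((it t).2.1.card + (it t).2.2.card) := by
            have := (Nat.cast_le (α := ℝ)).mpr h1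
            push_cast at this ⊢
            linarith
          have h5 : (((it t).1.erase x0).card : ℝ) = ((it t).1.card : ℝ) - 1 := by
            rw [h2]
            push_cast [h3]
            ring
          rw [h5]
          nlinarith [hWcard, hcDo, hcDi, hkn]
        have herase_subU : (it t).1.erase x0 ⊆ U := herase_sub.trans hWsub
        by_cases hdo : dout (it t).1 x0 < m
        · have hstep_eq : peelStep m dout din (it t)
              = ((it t).1.erase x0, insert x0 (it t).2.1, (it t).2.2) := by
            rw [peelStep, dif_pos hbad, if_pos hdo]
          rw [hstep_eq]
          have hDo' : ∀ x ∈ insert x0 (it t).2.1, dout ((it t).1.erase x0) x < m := by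
            intro x hx
            rcases Finset.mem_insert.mp hx with rfl | hx
            · exact lt_of_le_of_lt (doutMono _ _ _ (Finset.erase_subset _ _)) hdo
            · exact lt_of_le_of_lt (doutMono _ _ _ (Finset.erase_subset _ _)) (hDo x hx)
          have hmemW : ∀ x ∈ insert x0 (it t).2.1, x ∈ W := by
            intro x hx
            rcases Finset.mem_insert.mp hx with rfl | hx
            · exact hx0W
            · have : x ∈ W \ (it t).1 := by rw [← hUn]; exact Finset.mem_union_left _ hx
              exact (Finset.mem_sdiff.mp this).1
          refine ⟨herase_sub, ?_, hDo', ?_, ?_, hcDi⟩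
          · rw [hsdiff, ← hUn, Finset.insert_union]
          · intro x hx
            exact lt_of_le_of_lt (dinMono _ _ _ (Finset.erase_subset _ _)) (hDi x hx)
          · by_contra hni
            push_neg at hni
            have hdisj2 : Disjoint (insert x0 (it t).2.1) ((it t).1.erase x0) := by
              rw [Finset.disjoint_left]
              intro a ha hb
              rcases Finset.mem_insert.mp ha with rfl | ha
              · exact (Finset.mem_erase.mp hb).1 rfl
              · have : a ∈ W \ (it t).1 := by rw [← hUn]; exact Finset.mem_union_left _ ha
                exact (Finset.mem_sdiff.mp this).2 (Finset.erase_subset _ _ hb)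
            exact contra_aux ε k m hε0 hε R col U W hpr hk1 hkn hmn hn16 hWblue
              (insert x0 (it t).2.1) ((it t).1.erase x0) hdisj2 hni hScard herase_subU
              (Or.inl fun x hx => ⟨hmemW x hx, hDo' x hx⟩)
        · have hdi : din (it t).1 x0 < m := by
            rcases hx0spec.2 with h | h
            · exact absurd h hdo
            · exact h
          have hstep_eq : peelStep m dout din (it t)
              = ((it t).1.erase x0, (it t).2.1, insert x0 (it t).2.2) := by
            rw [peelStep, dif_pos hbad, if_neg hdo]
          rw [hstep_eq]
          have hDi' : ∀ x ∈ insert x0 (it t).2.2, din ((it t).1.erase x0) x < m := by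
            intro x hx
            rcases Finset.mem_insert.mp hx with rfl | hx
            · exact lt_of_le_of_lt (dinMono _ _ _ (Finset.erase_subset _ _)) hdi
            · exact lt_of_le_of_lt (dinMono _ _ _ (Finset.erase_subset _ _)) (hDi x hx)
          have hmemW : ∀ x ∈ insert x0 (it t).2.2, x ∈ W := by
            intro x hx
            rcases Finset.mem_insert.mp hx with rfl | hx
            · exact hx0W
            · have : x ∈ W \ (it t).1 := by rw [← hUn]; exact Finset.mem_union_right _ hx
              exact (Finset.mem_sdiff.mp this).1
          refine ⟨herase_sub, ?_, ?_, hDi', hcDo, ?_⟩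
          · rw [hsdiff, ← hUn]
            ext y
            simp only [Finset.mem_union, Finset.mem_insert]
            tauto
          · intro x hx
            exact lt_of_le_of_lt (doutMono _ _ _ (Finset.erase_subset _ _)) (hDo x hx)
          · by_contra hni
            push_neg at hni
            have hdisj2 : Disjoint (insert x0 (it t).2.2) ((it t).1.erase x0) := by
              rw [Finset.disjoint_left]
              intro a ha hb
              rcases Finset.mem_insert.mp ha with rfl | ha
              · exact (Finset.mem_erase.mp hb).1 rfl
              · have : a ∈ W \ (it t).1 := by rw [← hUn]; exact Finset.mem_union_right _ ha
                exact (Finset.mem_sdiff.mp this).2 (Finset.erase_subset _ _ hb)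
            exact contra_aux ε k m hε0 hε R col U W hpr hk1 hkn hmn hn16 hWblue
              (insert x0 (it t).2.2) ((it t).1.erase x0) hdisj2 hni hScard herase_subU
              (Or.inr fun x hx => ⟨hmemW x hx, hDi' x hx⟩)
      · rw [peelStep, dif_neg hbad]
        exact ⟨hS, hUn, hDo, hDi, hcDo, hcDi⟩
  -- termination
  have hterm : ∃ t, ∀ x ∈ (it t).1, m ≤ dout (it t).1 x ∧ m ≤ din (it t).1 x := by
    by_contra hcon
    push_neg at hcon
    have hbadall : ∀ t, ∃ x ∈ (it t).1, dout (it t).1 x < m ∨ din (it t).1 x < m := by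
      intro t
      obtain ⟨x, hx, hnx⟩ := hcon t
      refine ⟨x, hx, ?_⟩
      by_cases h1 : m ≤ dout (it t).1 x
      · exact Or.inr (by omega)
      · exact Or.inl (by omega)
    have hdec : ∀ t, (it t).1.card + t ≤ W.card := by
      intro t
      induction t with
      | zero => rw [hit0]; simp
      | succ t ih =>
        have hbad := hbadall t
        have hx0S : hbad.choose ∈ (it t).1 := hbad.choose_spec.1
        have hcard_pos : 1 ≤ (it t).1.card := Finset.card_pos.mpr ⟨_, hx0S⟩
        have hstep_card : (it (t + 1)).1 = (it t).1.erase hbad.choose := by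
          rw [hitS, peelStep, dif_pos hbad]
          split_ifs <;> rfl
        rw [hstep_card, Finset.card_erase_of_mem hx0S]
        omega
    have := hdec (W.card + 1)
    omega
  obtain ⟨t0, hGoodDeg⟩ := hterm
  obtain ⟨hS, hUn, _, _, hcDo, hcDi⟩ := hInv t0
  refine ⟨(it t0).1, ?_, fun x hx => hGoodDeg x hx⟩
  -- nonemptiness
  have h1 : W.card ≤ (it t0).1.card + ((it t0).2.1.card + (it t0).2.2.card) := by
    have hsub : W ⊆ (it t0).1 ∪ ((it t0).2.1 ∪ (it t0).2.2) := by
      intro y hy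
      rw [hUn]
      by_cases hyS : y ∈ (it t0).1
      · exact Finset.mem_union_left _ hyS
      · exact Finset.mem_union_right _ (Finset.mem_sdiff.mpr ⟨hy, hyS⟩)
    calc W.card ≤ ((it t0).1 ∪ ((it t0).2.1 ∪ (it t0).2.2)).card := Finset.card_le_card hsub
      _ ≤ (it t0).1.card + ((it t0).2.1 ∪ (it t0).2.2).card := Finset.card_union_le _ _
      _ ≤ (it t0).1.card + ((it t0).2.1.card + (it t0).2.2.card) := by
          have := Finset.card_union_le (it t0).2.1 (it t0).2.2
          omega
  have h2 : (0:ℝ) < ((it t0).1.card : ℝ) := by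
    have h4 := (Nat.cast_le (α := ℝ)).mpr h1
    push_cast at h4
    nlinarith [hWcard, hkn]
  rw [← Finset.card_pos]
  exact_mod_cast h2


lemma exists_W {V : Type*} (ε : ℝ) (hε0 : 0 < ε) (R : V → V → Prop) (col : V → V → Bool)
    (U : Finset V) (hn0 : (0:ℝ) < U.card)
    (hblue : ((((U ×ˢ U).filter fun p => R p.1 p.2 ∧ col p.1 p.2 = false).card : ℕ) : ℝ) ≤
      ε ^ 2 / 32 * (U.card : ℝ) ^ 2) :
    ∃ W : Finset V, W ⊆ U ∧ ((U.card : ℝ) - ε * U.card / 2 ≤ (W.card : ℝ)) ∧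
      ∀ x ∈ W, (((U.filter fun y => R x y ∧ col x y = false).card : ℝ) ≤ ε * U.card / 8) ∧
               (((U.filter fun y => R y x ∧ col y x = false).card : ℝ) ≤ ε * U.card / 8) := by
  classical
  set n : ℝ := (U.card : ℝ) with hn
  set g : V → ℝ := fun x => ((U.filter fun y => R x y ∧ col x y = false).card : ℝ)
    + ((U.filter fun y => R y x ∧ col y x = false).card : ℝ) with hg
  have hgnn : ∀ x, 0 ≤ g x := by
    intro x
    rw [hg]
    positivity
  have hsumOut : ∑ x ∈ U, (U.filter fun y => R x y ∧ col x y = false).card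
      = ((U ×ˢ U).filter fun p => R p.1 p.2 ∧ col p.1 p.2 = false).card := by
    rw [Finset.card_filter, Finset.sum_product]
    exact Finset.sum_congr rfl fun x _ => Finset.card_filter _ _
  have hsumIn : ∑ x ∈ U, (U.filter fun y => R y x ∧ col y x = false).card
      = ∑ x ∈ U, (U.filter fun y => R x y ∧ col x y = false).card :=
    sum_in_eq_sum_out (fun a b => R a b ∧ col a b = false) U
  have hsumBlue : ∑ x ∈ U, g x ≤ ε ^ 2 * n ^ 2 / 16 := by
    rw [hg]
    rw [Finset.sum_add_distrib]
    have e1 : ∑ x ∈ U, ((U.filter fun y => R x y ∧ col x y = false).card : ℝ)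
        = ((∑ x ∈ U, (U.filter fun y => R x y ∧ col x y = false).card : ℕ) : ℝ) := by
      push_cast; ring
    have e2 : ∑ x ∈ U, ((U.filter fun y => R y x ∧ col y x = false).card : ℝ)
        = ((∑ x ∈ U, (U.filter fun y => R y x ∧ col y x = false).card : ℕ) : ℝ) := by
      push_cast; ring
    rw [e1, e2, hsumIn, hsumOut]
    linarith [hblue]
  refine ⟨U.filter (fun x => g x ≤ ε * n / 8), Finset.filter_subset _ _, ?_, ?_⟩
  · -- the cardinality bound
    set W' := U.filter (fun x => g x ≤ ε * n / 8) with hW'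
    set Bad := U.filter (fun x => ¬ (g x ≤ ε * n / 8)) with hBad
    have hpart : W'.card + Bad.card = U.card :=
      Finset.card_filter_add_card_filter_not _
    have hsum1 : ∑ x ∈ Bad, g x ≤ ∑ x ∈ U, g x :=
      Finset.sum_le_sum_of_subset_of_nonneg (Finset.filter_subset _ _)
        (fun x _ _ => hgnn x)
    have hlow : (Bad.card : ℝ) * (ε * n / 8) ≤ ∑ x ∈ Bad, g x := by
      have h9 := Finset.card_nsmul_le_sum Bad g (ε * n / 8) ?_
      · rwa [nsmul_eq_mul] at h9
      · intro x hx
        rw [hBad, Finset.mem_filter] at hx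
        exact le_of_lt (lt_of_not_ge hx.2)
    have hεn8 : (0:ℝ) < ε * n / 8 := by positivity
    have hkey : (Bad.card : ℝ) * (ε * n / 8) ≤ ε ^ 2 * n ^ 2 / 16 :=
      le_trans hlow (le_trans hsum1 hsumBlue)
    have hb2 : (Bad.card : ℝ) ≤ ε * n / 2 := by nlinarith
    have hcast : n = (W'.card : ℝ) + (Bad.card : ℝ) := by
      rw [hn]; exact_mod_cast hpart.symm
    linarith
  · intro x hx
    rw [Finset.mem_filter] at hx
    have h1 := hx.2
    rw [hg] at h1
    constructor
    · have h0 : (0:ℝ) ≤ ((U.filter fun y => R y x ∧ col y x = false).card : ℝ) := by positivity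
      linarith
    · have h0 : (0:ℝ) ≤ ((U.filter fun y => R x y ∧ col x y = false).card : ℝ) := by positivity
      linarith

lemma embed_tree {V : Type*} {m : ℕ} (R : V → V → Prop) (col : V → V → Bool)
    (T : Fin m → Fin m → Prop) (hTasym : ∀ u v, T u v → ¬ T v u)
    (htree : (SimpleGraph.fromRel T).IsTree)
    (Good : Finset V) (hGood : Good.Nonempty)
    (hdeg : ∀ x ∈ Good, m ≤ (Good.filter fun y => R x y ∧ col x y = true).card ∧
            m ≤ (Good.filter fun y => R y x ∧ col y x = true).card) :
    ∃ f : Fin m → V, Function.Injective f ∧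
      ∀ u v, T u v → R (f u) (f v) ∧ col (f u) (f v) = true := by
  classical
  set G := SimpleGraph.fromRel T with hG
  have hconn : G.Connected := htree.isConnected
  have hac : G.IsAcyclic := htree.IsAcyclic
  have hm : 0 < m := Fin.pos_iff_nonempty.mpr hconn.nonempty
  set Conn : Finset (Fin m) → Prop :=
    fun s => ∀ a ∈ s, ∀ b ∈ s, ∃ p : G.Walk a b, ∀ x ∈ p.support, x ∈ s with hConn
  set P : Finset (Fin m) → Prop := fun s => ∃ f : Fin m → V, Set.InjOn f ↑s ∧
      (∀ a ∈ s, f a ∈ Good) ∧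
      (∀ u v, u ∈ s → v ∈ s → T u v → R (f u) (f v) ∧ col (f u) (f v) = true) with hP
  -- crossing lemma
  have cross : ∀ (s : Finset (Fin m)) {a b : Fin m} (p : G.Walk a b), a ∈ s → b ∉ s →
      ∃ u ∈ s, ∃ w, w ∉ s ∧ G.Adj u w := by
    intro s a b p
    induction p with
    | nil => intro ha hb; exact absurd ha hb
    | @cons u v w h q ih =>
      intro ha hb
      by_cases hc : v ∈ s
      · exact ih hc hb
      · exact ⟨u, ha, v, hc, h⟩
  -- uniqueness of neighbour in a connected set
  have huniq : ∀ (s : Finset (Fin m)), Conn s → ∀ w, w ∉ s → ∀ u, u ∈ s → ∀ u', u' ∈ s →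
      G.Adj w u → G.Adj w u' → u' = u := by
    intro s hcs w hw u hu u' hu' hadj hadj'
    by_contra hne
    obtain ⟨p, hp⟩ := hcs u hu u' hu'
    have hq : (p.toPath : G.Walk u u').IsPath := p.toPath.2
    have hwns : w ∉ (p.toPath : G.Walk u u').support :=
      fun hmem => hw (hp _ (p.support_toPath_subset hmem))
    have h1 : (SimpleGraph.Walk.cons hadj (p.toPath : G.Walk u u')).IsPath := hq.cons hwns
    have heq := SimpleGraph.isAcyclic_iff_path_unique.mp hac
      (⟨_, h1⟩ : G.Path w u') (SimpleGraph.Path.singleton hadj')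
    have hu_mem : u ∈ (SimpleGraph.Walk.cons hadj (p.toPath : G.Walk u u')).support := by
      rw [SimpleGraph.Walk.support_cons]
      exact List.mem_cons_of_mem _ (SimpleGraph.Walk.start_mem_support _)
    have h2 : u ∈ ((SimpleGraph.Path.singleton hadj' : G.Path w u') : G.Walk w u').support := by
      rw [← heq]; exact hu_mem
    simp only [SimpleGraph.Path.singleton, SimpleGraph.Walk.support_cons,
      SimpleGraph.Walk.support_nil, List.mem_cons, List.mem_singleton] at h2
    rcases h2 with h2 | h2 | h2
    · exact hw (h2 ▸ hu)
    · exact hne h2.symm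
    · simp at h2
  -- growth step
  have grow : ∀ (t : ℕ) (s : Finset (Fin m)), Conn s → s.Nonempty → s.card + t = m →
      P s → P Finset.univ := by
    intro t
    induction t with
    | zero =>
      intro s _ _ hcard hPs
      have : s = Finset.univ := Finset.eq_univ_of_card s (by simpa using hcard)
      rwa [this] at hPs
    | succ t ih =>
      intro s hcs hsne hcard hPs
      have hslt : s.card < m := by omega
      have hex : ∃ b, b ∉ s := by
        by_contra hcon
        push_neg at hcon
        have := Finset.eq_univ_iff_forall.mpr hcon
        rw [this, Finset.card_univ, Fintype.card_fin] at hslt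
        exact lt_irrefl _ hslt
      obtain ⟨b, hb⟩ := hex
      obtain ⟨a, ha⟩ := hsne
      obtain ⟨p⟩ := hconn.preconnected a b
      obtain ⟨u, hu, w, hw, hadj⟩ := cross s p ha hb
      obtain ⟨f, hinj, hfG, hfE⟩ := hPs
      have hfu : f u ∈ Good := hfG u hu
      have himg : (s.image f).card ≤ s.card := Finset.card_image_le
      have hwadj : G.Adj w u := hadj.symm
      -- connectivity of the extended set
      have hcs' : Conn (insert w s) := by
        intro x hx z hz
        rcases Finset.mem_insert.mp hx with hx0 | hx
        · subst x
          rcases Finset.mem_insert.mp hz with hz0 | hz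
          · subst z
            exact ⟨SimpleGraph.Walk.nil, by simp⟩
          ·
            obtain ⟨q, hq⟩ := hcs u hu z hz
            refine ⟨SimpleGraph.Walk.cons hwadj q, ?_⟩
            intro y hy
            rw [SimpleGraph.Walk.support_cons, List.mem_cons] at hy
            rcases hy with hy | hy
            · exact hy ▸ Finset.mem_insert_self _ _
            · exact Finset.mem_insert_of_mem (hq _ hy)
        · rcases Finset.mem_insert.mp hz with hz0 | hz
          · subst z
            obtain ⟨q, hq⟩ := hcs u hu x hx
            refine ⟨(SimpleGraph.Walk.cons hwadj q).reverse, ?_⟩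
            intro y hy
            rw [SimpleGraph.Walk.support_reverse, List.mem_reverse,
              SimpleGraph.Walk.support_cons, List.mem_cons] at hy
            rcases hy with hy | hy
            · exact hy ▸ Finset.mem_insert_self _ _
            · exact Finset.mem_insert_of_mem (hq _ hy)
          · obtain ⟨q, hq⟩ := hcs x hx z hz
            exact ⟨q, fun y hy => Finset.mem_insert_of_mem (hq _ hy)⟩
      have hcard' : (insert w s).card + t = m := by
        rw [Finset.card_insert_of_notMem hw]; omega
      have hne' : (insert w s).Nonempty := ⟨w, Finset.mem_insert_self _ _⟩
      have huniqw : ∀ u' ∈ s, G.Adj w u' → u' = u := fun u' hu' h' =>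
        huniq s hcs w hw u hu u' hu' hwadj h'
      -- pick the new image point, depending on the orientation of the tree edge
      have hdir := ((SimpleGraph.fromRel_adj T u w).mp hadj).2
      have key : ∃ y, y ∈ Good ∧ y ∉ s.image f ∧
          ((T u w → R (f u) y ∧ col (f u) y = true) ∧
           (T w u → R y (f u) ∧ col y (f u) = true)) := by
        rcases hdir with hTuw | hTwu
        · set nb := Good.filter fun y => R (f u) y ∧ col (f u) y = true with hnb
          have hnbc : m ≤ nb.card := (hdeg _ hfu).1
          have hpos : 0 < (nb \ s.image f).card := by
            have := Finset.le_card_sdiff (s.image f) nb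
            omega
          obtain ⟨y, hy⟩ := Finset.card_pos.mp hpos
          rw [Finset.mem_sdiff, hnb, Finset.mem_filter] at hy
          exact ⟨y, hy.1.1, hy.2, fun _ => hy.1.2, fun h => absurd hTuw (hTasym _ _ h)⟩
        · set nb := Good.filter fun y => R y (f u) ∧ col y (f u) = true with hnb
          have hnbc : m ≤ nb.card := (hdeg _ hfu).2
          have hpos : 0 < (nb \ s.image f).card := by
            have := Finset.le_card_sdiff (s.image f) nb
            omega
          obtain ⟨y, hy⟩ := Finset.card_pos.mp hpos
          rw [Finset.mem_sdiff, hnb, Finset.mem_filter] at hy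
          exact ⟨y, hy.1.1, hy.2, fun h => absurd hTwu (hTasym _ _ h), fun _ => hy.1.2⟩
      obtain ⟨y, hyG, hyimg, hyout, hyin⟩ := key
      set f' := Function.update f w y with hf'
      have hf'eq : ∀ a ∈ s, f' a = f a := fun a haa =>
        Function.update_of_ne (ne_of_mem_of_not_mem haa hw) _ _
      have hf'w : f' w = y := Function.update_self _ _ _
      refine ih (insert w s) hcs' hne' hcard' ⟨f', ?_, ?_, ?_⟩
      · -- injectivity
        intro x hx z hz hxz
        rw [Finset.coe_insert, Set.mem_insert_iff] at hx hz
        rcases hx with hx | hx <;> rcases hz with hz | hz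
        · rw [hx, hz]
        · subst hx
          rw [hf'w, hf'eq z hz] at hxz
          exact absurd (Finset.mem_image_of_mem f hz) (hxz ▸ hyimg)
        · subst hz
          rw [hf'w, hf'eq x hx] at hxz
          exact absurd (Finset.mem_image_of_mem f hx) (hxz.symm ▸ hyimg)
        · rw [hf'eq x hx, hf'eq z hz] at hxz
          exact hinj hx hz hxz
      · -- image in Good
        intro a haa
        rcases Finset.mem_insert.mp haa with haa | haa
        · rw [haa, hf'w]; exact hyG
        · rw [hf'eq a haa]; exact hfG a haa
      · -- edge condition
        intro u1 v1 h1 h2 hT1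
        rcases Finset.mem_insert.mp h1 with h10 | h1 <;>
          rcases Finset.mem_insert.mp h2 with h20 | h2
        · subst u1; subst v1; exact absurd hT1 (hTasym _ _ hT1)
        · subst u1
          have hadj1 : G.Adj w v1 := (SimpleGraph.fromRel_adj T w v1).mpr
            ⟨fun hh => hw (hh ▸ h2), Or.inl hT1⟩
          have := huniqw v1 h2 hadj1
          subst v1
          rw [hf'w, hf'eq u hu]
          exact hyin hT1
        · subst v1
          have hadj1 : G.Adj w u1 := (SimpleGraph.fromRel_adj T w u1).mpr
            ⟨fun hh => hw (hh ▸ h1), Or.inr hT1⟩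
          have := huniqw u1 h1 hadj1
          subst u1
          rw [hf'w, hf'eq u hu]
          exact hyout hT1
        · rw [hf'eq u1 h1, hf'eq v1 h2]
          exact hfE u1 v1 h1 h2 hT1
  -- base case and conclusion
  obtain ⟨g0, hg0⟩ := hGood
  have hne : Nonempty (Fin m) := hconn.nonempty
  obtain ⟨r⟩ := hne
  have hbase : P {r} := by
    refine ⟨fun _ => g0, ?_, ?_, ?_⟩
    · intro x hx z hz _
      simp only [Finset.coe_singleton, Set.mem_singleton_iff] at hx hz
      rw [hx, hz]
    · intro a _; exact hg0
    · intro u v hu hv hT1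
      rw [Finset.mem_singleton] at hu hv
      subst hu; subst hv
      exact absurd hT1 (hTasym _ _ hT1)
  have hconnr : Conn {r} := by
    intro x hx z hz
    rw [Finset.mem_singleton] at hx hz
    subst hx; subst hz
    exact ⟨SimpleGraph.Walk.nil, by simp⟩
  obtain ⟨f, hinj, hfG, hfE⟩ := grow (m - 1) {r} hconnr ⟨r, Finset.mem_singleton_self r⟩
    (by simp; omega) hbase
  refine ⟨f, ?_, ?_⟩
  · rw [← Set.injOn_univ]
    simpa using hinj
  · intro u v hT1
    exact hfE u v (Finset.mem_univ u) (Finset.mem_univ v) hT1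

/-- Lemma 3.2: if `G` is an `(ε, σ log₂ N)`-pseudorandom `2`-coloured tournament on `N`
vertices and `U` spans at most `(ε²/32)|U|²` blue edges, with `(ε/4)|U| ≥ σ log₂ N`, then
`G` contains a red copy of every oriented tree on at most `(ε/4)|U|` vertices. -/
theorem stmt2 {V : Type*} [Fintype V] (ε σ : ℝ) (hε0 : 0 < ε) (hε : ε < 1 / 2) (hσ : 0 < σ)
    (R : V → V → Prop) (hR : IsTournament R)
    (hpr : Pseudorandom R ε (σ * Real.logb 2 (Fintype.card V)))
    (col : V → V → Bool) (U : Finset V)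
    (hblue : ({p : V × V | p.1 ∈ U ∧ p.2 ∈ U ∧ R p.1 p.2 ∧ col p.1 p.2 = false}.ncard : ℝ) ≤
      ε ^ 2 / 32 * (U.card : ℝ) ^ 2)
    (hU : σ * Real.logb 2 (Fintype.card V) ≤ ε / 4 * U.card) :
    ∀ (m : ℕ) (T : Fin m → Fin m → Prop), IsOrientedTree T → (m : ℝ) ≤ ε / 4 * U.card →
      ColCopy R col true T := by
  classical
  intro m T hT hmcard
  obtain ⟨hTasym, htree⟩ := hT
  rcases Nat.eq_zero_or_pos m with hm0 | hm0
  · subst hm0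
    exact absurd (Fin.pos_iff_nonempty.mpr htree.isConnected.nonempty) (lt_irrefl 0)
  set k := σ * Real.logb 2 (Fintype.card V) with hk
  set n : ℝ := (U.card : ℝ) with hn
  by_cases hk1 : k ≤ 1
  · -- degenerate case: V has at most one vertex
    exfalso
    have hVsub : ∀ a b : V, a = b := by
      intro a b
      by_contra hne
      have hd : Disjoint ({a} : Finset V) ({b} : Finset V) :=
        Finset.disjoint_singleton.mpr hne
      have hRof : ∀ c d : V, Disjoint ({c} : Finset V) ({d} : Finset V) → R c d := by
        intro c d hd'
        have h1 := hpr {c} {d} hd' (by simpa using hk1) (by simpa using hk1)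
        by_contra hR1
        have hz : edgeCount R {c} {d} = 0 := by
          rw [edgeCount_eq_card]
          apply Finset.card_eq_zero.mpr
          ext ⟨x, y⟩
          simp only [Finset.mem_filter, Finset.mem_product, Finset.mem_singleton,
            Finset.notMem_empty, iff_false, not_and, and_imp]
          rintro rfl rfl
          exact hR1
        rw [hz] at h1
        simp at h1
        nlinarith
      exact hR.1 a b (hRof a b hd) (hRof b a hd.symm)
    have hU1 : U.card ≤ 1 := Finset.card_le_one.mpr fun a _ b _ => hVsub a b
    have hm1 : (1 : ℝ) ≤ (m : ℝ) := by exact_mod_cast hm0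
    have hn1 : n ≤ 1 := by rw [hn]; exact_mod_cast hU1
    have hn0 : (0:ℝ) ≤ n := by rw [hn]; positivity
    nlinarith [hmcard]
  push_neg at hk1
  have hkn : k ≤ ε / 4 * n := hU
  have hn0 : 0 < n := by nlinarith
  by_cases hm1 : m = 1
  · -- a single vertex
    subst hm1
    have hUne : U.Nonempty := by
      rw [← Finset.card_pos]
      rw [hn] at hn0
      exact_mod_cast hn0
    obtain ⟨u0, _⟩ := hUne
    refine ⟨fun _ => u0, fun x y _ => Subsingleton.elim x y, ?_⟩
    intro u v hTuv
    have huv : u = v := Subsingleton.elim u v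
    rw [huv] at hTuv
    exact absurd hTuv (hTasym _ _ hTuv)
  have hm2 : 2 ≤ m := by omega
  have hm2' : (2:ℝ) ≤ (m:ℝ) := by exact_mod_cast hm2
  have hmn : (m : ℝ) ≤ ε / 4 * n := hmcard
  have hn16 : 16 < n := by nlinarith
  have hblue' : ((((U ×ˢ U).filter fun p => R p.1 p.2 ∧ col p.1 p.2 = false).card : ℕ) : ℝ)
      ≤ ε ^ 2 / 32 * n ^ 2 := by
    have hset : {p : V × V | p.1 ∈ U ∧ p.2 ∈ U ∧ R p.1 p.2 ∧ col p.1 p.2 = false}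
        = ↑((U ×ˢ U).filter fun p => R p.1 p.2 ∧ col p.1 p.2 = false) := by
      ext ⟨x, y⟩
      simp [Finset.mem_filter, Finset.mem_product, and_assoc]
    rw [hset, Set.ncard_coe_finset] at hblue
    exact hblue
  obtain ⟨W, hWsub, hWcard, hWblue⟩ := exists_W ε hε0 R col U hn0 hblue'
  obtain ⟨Good, hGne, hGdeg⟩ := exists_good_subset ε k m hε0 hε R col U W hpr hk1
    hkn hmn hn16 hWsub hWcard hWblue
  obtain ⟨f, hfinj, hfE⟩ := embed_tree R col T hTasym htree Good hGne hGdeg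
  exact ⟨f, hfinj, hfE⟩
end
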